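/- The function x ↦ sinc²(x²) is integrable on ℝ and ∫_ℝ sinc²(x²) dx = 4√π/3. -/

import Mathlib

open MeasureTheory Real Set Filter Topology

/-!
Substituting `t = x²` turns the integral into `∫₀^∞ sin² t · t^(-5/2) dt`. Writing
`t^(-5/2) = Γ(5/2)⁻¹ ∫₀^∞ s^(3/2) e^(-st) ds` and exchanging the order of integration (the
integrand is nonnegative) expresses it through the Laplace transform
`∫₀^∞ sin² t · e^(-st) dt = 2 / (s (s² + 4))`, which leaves
`Γ(5/2)⁻¹ · 2 ∫₀^∞ √s / (s² + 4) ds`. The substitution `s = u²` makes this last integral the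
elementary `4 ∫₀^∞ u² / (u⁴ + 4) du = π`, and `Γ(5/2) = 3√π/4` gives `4√π/3`.
-/

/-- `sinc x = sin x / x` for `x ≠ 0`, and `sinc 0 = 1`. -/
noncomputable def sinc_ (x : ℝ) : ℝ := if x = 0 then 1 else Real.sin x / x

noncomputable def laplaceTransform (f : ℝ → ℝ) (s : ℝ) : ℝ :=
  ∫ t in Ioi 0, f t * exp (-(s * t))

theorem integral_mul_rpow_neg_eq_integral_laplaceTransform {f : ℝ → ℝ} {p : ℝ} (hp : 0 < p)
    (hf : Measurable f) (hf_nonneg : ∀ t ∈ Ioi (0 : ℝ), 0 ≤ f t)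
    (hf_exp : ∀ s ∈ Ioi (0 : ℝ), IntegrableOn (fun t => f t * exp (-(s * t))) (Ioi 0))
    (hL : IntegrableOn (fun s => s ^ (p - 1) * laplaceTransform f s) (Ioi 0)) :
    ∫ t in Ioi 0, f t * t ^ (-p) =
      (Gamma p)⁻¹ * ∫ s in Ioi 0, s ^ (p - 1) * laplaceTransform f s := by
  set F : ℝ → ℝ → ℝ := fun s t => s ^ (p - 1) * (f t * exp (-(s * t)))
  have hF_int_t (s : ℝ) : ∫ t in Ioi 0, F s t = s ^ (p - 1) * laplaceTransform f s :=
    integral_const_mul _ _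
  have hF_int_s : ∀ t ∈ Ioi (0 : ℝ), ∫ s in Ioi 0, F s t = Gamma p * (f t * t ^ (-p)) := by
    intro t ht
    calc ∫ s in Ioi 0, F s t = f t * ∫ s in Ioi 0, s ^ (p - 1) * exp (-(t * s)) := by
          rw [← integral_const_mul]
          congr 1 with s
          simp only [F]
          ring_nf
      _ = Gamma p * (f t * t ^ (-p)) := by
          rw [integral_rpow_mul_exp_neg_mul_Ioi hp ht, one_div, inv_rpow (le_of_lt ht),
            ← rpow_neg (le_of_lt ht)]
          ring
  have hF : Integrable (Function.uncurry F)
      ((volume.restrict (Ioi (0 : ℝ))).prod (volume.restrict (Ioi (0 : ℝ)))) := by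
    refine (integrable_prod_iff (by fun_prop)).2 ⟨?_, hL.congr ?_⟩
    · filter_upwards [ae_restrict_mem measurableSet_Ioi] with s hs
      exact (hf_exp s hs).const_mul (s ^ (p - 1))
    · filter_upwards [ae_restrict_mem measurableSet_Ioi] with s hs
      rw [← hF_int_t]
      refine setIntegral_congr_fun measurableSet_Ioi fun t ht => ?_
      have hft := hf_nonneg t ht
      have hs_pow : 0 ≤ s ^ (p - 1) := rpow_nonneg (le_of_lt hs) _
      exact (Real.norm_of_nonneg (by simp only [F]; positivity)).symm
  calc ∫ t in Ioi 0, f t * t ^ (-p)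
      = (Gamma p)⁻¹ * ∫ t in Ioi 0, ∫ s in Ioi 0, F s t := by
        rw [setIntegral_congr_fun measurableSet_Ioi hF_int_s, integral_const_mul,
          inv_mul_cancel_left₀ (Gamma_pos_of_pos hp).ne']
    _ = (Gamma p)⁻¹ * ∫ s in Ioi 0, s ^ (p - 1) * laplaceTransform f s := by
        simp only [← integral_integral_swap hF, hF_int_t]

section SinSq

variable {s : ℝ}

noncomputable def sinSqExpPrimitive (s t : ℝ) : ℝ :=
  exp (-(s * t)) *
    ((s ^ 2 * cos (2 * t) - 2 * s * sin (2 * t) - (s ^ 2 + 4)) / (2 * s * (s ^ 2 + 4)))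

theorem hasDerivAt_sinSqExpPrimitive (hs : s ≠ 0) (t : ℝ) :
    HasDerivAt (sinSqExpPrimitive s) (sin t ^ 2 * exp (-(s * t))) t := by
  have hexp : HasDerivAt (fun t => exp (-(s * t))) (-s * exp (-(s * t))) t := by
    simpa [mul_comm] using ((hasDerivAt_id t).const_mul s).neg.exp
  have hcos : HasDerivAt (fun t => cos (2 * t)) (-2 * sin (2 * t)) t := by
    simpa [mul_comm] using ((hasDerivAt_id t).const_mul 2).cos
  have hsin : HasDerivAt (fun t => sin (2 * t)) (2 * cos (2 * t)) t := by
    simpa [mul_comm] using ((hasDerivAt_id t).const_mul 2).sin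
  refine (hexp.mul ((((hcos.const_mul (s ^ 2)).sub (hsin.const_mul (2 * s))).sub_const
    (s ^ 2 + 4)).div_const (2 * s * (s ^ 2 + 4)))).congr_deriv ?_
  simp only [Pi.sub_apply]
  rw [sin_sq_eq_half_sub]
  field_simp
  ring

theorem tendsto_sinSqExpPrimitive_atTop (hs : 0 < s) :
    Tendsto (sinSqExpPrimitive s) atTop (𝓝 0) := by
  have hexp : Tendsto (fun t => exp (-(s * t))) atTop (𝓝 0) :=
    tendsto_exp_neg_atTop_nhds_zero.comp (tendsto_id.const_mul_atTop hs)
  refine hexp.zero_mul_isBoundedUnder_le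
    (isBoundedUnder_of ⟨(2 * s ^ 2 + 2 * s + 4) / (2 * s * (s ^ 2 + 4)), fun t => ?_⟩)
  simp only [Function.comp_apply, Real.norm_eq_abs]
  rw [abs_div, abs_of_pos (by positivity : 0 < 2 * s * (s ^ 2 + 4))]
  gcongr
  rw [abs_le]
  constructor <;> nlinarith [neg_one_le_cos (2 * t), cos_le_one (2 * t),
    neg_one_le_sin (2 * t), sin_le_one (2 * t)]

theorem integrableOn_sin_sq_mul_exp_neg_mul (hs : 0 < s) :
    IntegrableOn (fun t => sin t ^ 2 * exp (-(s * t))) (Ioi 0) :=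
  integrableOn_Ioi_deriv_of_nonneg' (fun t _ => hasDerivAt_sinSqExpPrimitive hs.ne' t)
    (fun t _ => by positivity) (tendsto_sinSqExpPrimitive_atTop hs)

theorem laplaceTransform_sin_sq (hs : 0 < s) :
    laplaceTransform (fun t => sin t ^ 2) s = 2 / (s * (s ^ 2 + 4)) := by
  rw [laplaceTransform, integral_Ioi_of_hasDerivAt_of_nonneg'
    (fun t _ => hasDerivAt_sinSqExpPrimitive hs.ne' t) (fun t _ => by positivity)
    (tendsto_sinSqExpPrimitive_atTop hs), sinSqExpPrimitive]
  simp only [mul_zero, neg_zero, exp_zero, cos_zero, sin_zero]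
  field_simp
  ring

end SinSq

-- Partial fractions, from `u⁴ + 4 = (1 + (u - 1)²) (1 + (u + 1)²)`.
noncomputable def sqDivQuarticPrimitive (u : ℝ) : ℝ :=
  (log (1 + (u - 1) ^ 2) - log (1 + (u + 1) ^ 2)) / 8 + (arctan (u - 1) + arctan (u + 1)) / 4

theorem hasDerivAt_sqDivQuarticPrimitive (u : ℝ) :
    HasDerivAt sqDivQuarticPrimitive (u ^ 2 / (u ^ 4 + 4)) u := by
  have hlog (c : ℝ) :
      HasDerivAt (fun u => log (1 + (u - c) ^ 2)) (2 * (u - c) / (1 + (u - c) ^ 2)) u := by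
    simpa using ((((hasDerivAt_id u).sub_const c).pow 2).const_add 1).log
      (by positivity : (0 : ℝ) < 1 + (u - c) ^ 2).ne'
  have harctan (c : ℝ) : HasDerivAt (fun u => arctan (u - c)) (1 / (1 + (u - c) ^ 2)) u := by
    simpa using ((hasDerivAt_id u).sub_const c).arctan
  have := (((hlog 1).sub (hlog (-1))).div_const 8).add
    (((harctan 1).add (harctan (-1))).div_const 4)
  simp only [sub_neg_eq_add] at this
  refine this.congr_deriv ?_
  field_simp
  ring

theorem tendsto_sqDivQuarticPrimitive_atTop :
    Tendsto sqDivQuarticPrimitive atTop (𝓝 (π / 4)) := by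
  have hlog : Tendsto (fun u => log (1 + (u - 1) ^ 2) - log (1 + (u + 1) ^ 2)) atTop (𝓝 0) := by
    have hcont : ContinuousAt
        (fun v : ℝ => log ((1 - 2 * v + 2 * v ^ 2) / (1 + 2 * v + 2 * v ^ 2))) 0 := by
      fun_prop (disch := norm_num)
    convert (hcont.tendsto.comp tendsto_inv_atTop_zero).congr' ?_ using 2
    · norm_num
    filter_upwards [eventually_gt_atTop 0] with u hu
    rw [Function.comp_apply, ← log_div (by positivity) (by positivity)]
    congr 1
    field_simp
    ring
  have harctan (c : ℝ) : Tendsto (fun u => arctan (u + c)) atTop (𝓝 (π / 2)) :=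
    (tendsto_arctan_atTop.mono_right nhdsWithin_le_nhds).comp
      (tendsto_atTop_add_const_right _ c tendsto_id)
  convert (hlog.div_const 8).add (((harctan (-1)).add (harctan 1)).div_const 4) using 2 with u
  · simp [sqDivQuarticPrimitive, sub_eq_add_neg]
  · ring

theorem integrableOn_sq_div_pow_four_add_four :
    IntegrableOn (fun u : ℝ => u ^ 2 / (u ^ 4 + 4)) (Ioi 0) :=
  integrableOn_Ioi_deriv_of_nonneg' (fun u _ => hasDerivAt_sqDivQuarticPrimitive u)
    (fun u _ => by positivity) tendsto_sqDivQuarticPrimitive_atTop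

theorem integral_sq_div_pow_four_add_four :
    ∫ u in Ioi (0 : ℝ), u ^ 2 / (u ^ 4 + 4) = π / 4 := by
  rw [integral_Ioi_of_hasDerivAt_of_nonneg' (fun u _ => hasDerivAt_sqDivQuarticPrimitive u)
    (fun u _ => by positivity) tendsto_sqDivQuarticPrimitive_atTop]
  simp [sqDivQuarticPrimitive]

theorem sqrt_div_sq_add_four_comp_sq_eqOn :
    EqOn (fun x : ℝ => (|2| * x ^ ((2 : ℝ) - 1)) • (√(x ^ (2 : ℝ)) / ((x ^ (2 : ℝ)) ^ 2 + 4)))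
      (fun x => 2 * (x ^ 2 / (x ^ 4 + 4))) (Ioi 0) := by
  intro x (hx : 0 < x)
  simp only [rpow_two, sqrt_sq hx.le, abs_two, smul_eq_mul]
  rw [show (2 : ℝ) - 1 = 1 by norm_num, rpow_one]
  ring

theorem integrableOn_sqrt_div_sq_add_four :
    IntegrableOn (fun s : ℝ => √s / (s ^ 2 + 4)) (Ioi 0) :=
  (integrableOn_Ioi_comp_rpow_iff _ two_ne_zero).1 <|
    IntegrableOn.congr_fun (integrableOn_sq_div_pow_four_add_four.const_mul 2)
      sqrt_div_sq_add_four_comp_sq_eqOn.symm measurableSet_Ioi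

theorem integral_sqrt_div_sq_add_four : ∫ s in Ioi (0 : ℝ), √s / (s ^ 2 + 4) = π / 2 := by
  rw [← integral_comp_rpow_Ioi _ two_ne_zero,
    setIntegral_congr_fun measurableSet_Ioi sqrt_div_sq_add_four_comp_sq_eqOn, integral_const_mul,
    integral_sq_div_pow_four_add_four]
  ring

theorem integral_sin_sq_mul_rpow_neg_five_halves :
    ∫ t in Ioi 0, sin t ^ 2 * t ^ (-(5 / 2 : ℝ)) = 4 * √π / 3 := by
  have hL : EqOn (fun s => s ^ ((5 / 2 : ℝ) - 1) * laplaceTransform (fun t => sin t ^ 2) s)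
      (fun s => 2 * (√s / (s ^ 2 + 4))) (Ioi 0) := by
    intro s (hs : 0 < s)
    dsimp only
    rw [laplaceTransform_sin_sq hs, show (5 / 2 : ℝ) - 1 = 1 + 1 / 2 by norm_num,
      rpow_add hs, rpow_one, ← sqrt_eq_rpow]
    field_simp
  have hGamma : Gamma (5 / 2) = 3 * √π / 4 := by
    rw [show (5 / 2 : ℝ) = (2 : ℕ) + 1 / 2 by norm_num, Gamma_nat_add_half]
    norm_num
  rw [integral_mul_rpow_neg_eq_integral_laplaceTransform (by norm_num) (by fun_prop)
      (fun t _ => sq_nonneg _) (fun s hs => integrableOn_sin_sq_mul_exp_neg_mul hs)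
      (IntegrableOn.congr_fun (integrableOn_sqrt_div_sq_add_four.const_mul 2) hL.symm
        measurableSet_Ioi),
    setIntegral_congr_fun measurableSet_Ioi hL, integral_const_mul, integral_sqrt_div_sq_add_four,
    hGamma]
  field_simp
  exact (sq_sqrt pi_pos.le).symm

theorem sinc_sq_mul_one_add_sq_le (y : ℝ) : sinc y ^ 2 * (1 + y ^ 2) ≤ 2 := by
  rcases eq_or_ne y 0 with rfl | hy
  · norm_num [sinc_zero]
  have hsinc : sinc y ^ 2 ≤ 1 := (sq_le_one_iff_abs_le_one _).2 (abs_sinc_le_one y)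
  have hsin : sinc y ^ 2 * y ^ 2 = sin y ^ 2 := by
    rw [sinc_of_ne_zero hy]
    field_simp
  nlinarith [sin_sq_le_one y]

theorem integrable_sinc_sq_comp_sq : Integrable fun x : ℝ => sinc (x ^ 2) ^ 2 := by
  refine (integrable_inv_one_add_sq.const_mul 4).mono'
    ((continuous_sinc.comp (continuous_pow 2)).pow 2).aestronglyMeasurable
    (ae_of_all _ fun x => ?_)
  rw [norm_of_nonneg (sq_nonneg _), ← div_eq_mul_inv, le_div_iff₀ (by positivity)]
  calc sinc (x ^ 2) ^ 2 * (1 + x ^ 2) ≤ sinc (x ^ 2) ^ 2 * (1 + (x ^ 2) ^ 2) * 2 := by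
        rw [mul_assoc]
        gcongr
        nlinarith [sq_nonneg (x ^ 2 - 1)]
    _ ≤ 4 := by linarith [sinc_sq_mul_one_add_sq_le (x ^ 2)]

theorem integral_sinc_sq_comp_sq :
    ∫ x, sinc (x ^ 2) ^ 2 = ∫ t in Ioi 0, sin t ^ 2 * t ^ (-(5 / 2 : ℝ)) := by
  have heven : (fun x : ℝ => sinc (x ^ 2) ^ 2) = fun x => (fun y => sinc (y ^ 2) ^ 2) |x| := by
    simp only [sq_abs]
  rw [heven, integral_comp_abs (f := fun y => sinc (y ^ 2) ^ 2),
    ← integral_comp_rpow_Ioi (fun t => sin t ^ 2 * t ^ (-(5 / 2 : ℝ))) two_ne_zero,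
    ← integral_const_mul]
  refine setIntegral_congr_fun measurableSet_Ioi fun x (hx : 0 < x) => ?_
  have h1 : x ^ (2 : ℝ) = x ^ 2 := rpow_two x
  have h2 : (x ^ (2 : ℝ)) ^ (-(5 / 2 : ℝ)) = (x ^ 5)⁻¹ := by
    rw [← rpow_mul hx.le, ← rpow_natCast, ← rpow_neg hx.le]
    norm_num
  rw [smul_eq_mul, h2, h1, sinc_of_ne_zero (by positivity), abs_two,
    show (2 : ℝ) - 1 = 1 by norm_num, rpow_one]
  field_simp

theorem integral_sinc_sq :
    Integrable (fun x : ℝ => (sinc_ (x ^ 2)) ^ 2) ∧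
    ∫ x : ℝ, (sinc_ (x ^ 2)) ^ 2 = 4 * Real.sqrt Real.pi / 3 :=
  -- `sinc_` unfolds to `Real.sinc`.
  ⟨integrable_sinc_sq_comp_sq,
    integral_sinc_sq_comp_sq.trans integral_sin_sq_mul_rpow_neg_five_halves⟩
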